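/- If P = {f_1, …, f_n} is a pseudo-triangular basis of fuzzy sets, then the range of T_P equals the Hamiltonian path ⋃_{i=1}^{n−1} conv{e_i, e_{i+1}} in the 1-skeleton of the fundamental simplex Δ_n. -/

import Mathlib

/-!
The nodes cut `[0, 1]` into the intervals `[t i, t (i + 1)]`. On such an interval only `f i`
and `f (i + 1) = 1 - f i` can be nonzero, so `T_P x = f i x • e i + (1 - f i x) • e (i + 1)`,
and since `f i` maps the interval onto `[0, 1]`, `T_P` maps it onto the edge `[e i, e (i + 1)]`.
-/

open Set

theorem Fin.exists_Icc_consecutive_mem {α : Type*} [LinearOrder α] {n : ℕ} (t : Fin n → α)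
    {x : α} {k : ℕ} (hk : k + 1 < n) (h₀ : t ⟨0, by omega⟩ ≤ x) (hx : x ≤ t ⟨k + 1, hk⟩) :
    ∃ (i : Fin n) (hi : (i : ℕ) + 1 < n), x ∈ Icc (t i) (t ⟨i + 1, hi⟩) := by
  induction k with
  | zero => exact ⟨⟨0, by omega⟩, hk, h₀, hx⟩
  | succ k ih =>
    by_cases hxk : x ≤ t ⟨k + 1, by omega⟩
    · exact ih (by omega) h₀ hxk
    · exact ⟨⟨k + 1, by omega⟩, hk, (not_le.mp hxk).le, hx⟩

theorem Monotone.iUnion_Icc_consecutive {α : Type*} [LinearOrder α] {n : ℕ} (hn : 1 < n)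
    {t : Fin n → α} (ht : Monotone t) :
    ⋃ (i : Fin n) (hi : (i : ℕ) + 1 < n), Icc (t i) (t ⟨i + 1, hi⟩) =
      Icc (t ⟨0, by omega⟩) (t ⟨n - 1, by omega⟩) := by
  refine Subset.antisymm (iUnion₂_subset fun i hi => Icc_subset_Icc ?_ ?_) fun x hx => ?_
  · exact ht (Fin.mk_le_mk.mpr (Nat.zero_le _))
  · exact ht (Fin.mk_le_mk.mpr (by omega))
  · have hlast : n - 2 + 1 = n - 1 := by omega
    simpa only [mem_iUnion, hlast] using
      Fin.exists_Icc_consecutive_mem t (k := n - 2) (by omega) hx.1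
        (by simpa only [hlast] using hx.2)

theorem EuclideanSpace.toLp_eq_smul_single_add_smul_single {ι : Type*} [Fintype ι]
    [DecidableEq ι] {a b : ι} (hab : a ≠ b) {v : ι → ℝ} (hv : ∀ j, j ≠ a → j ≠ b → v j = 0) :
    WithLp.toLp 2 v = v a • EuclideanSpace.single a 1 + v b • EuclideanSpace.single b 1 := by
  ext j
  by_cases hja : j = a
  · subst hja; simp [hab]
  by_cases hjb : j = b
  · subst hjb; simp [hja]
  · simp [hja, hjb, hv j hja hjb]

theorem image_eq_segment_of_image_eq_Icc {E : Type*} [AddCommGroup E] [Module ℝ E]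
    {s : Set ℝ} {F : ℝ → E} {φ : ℝ → ℝ} {p q : E} (hφ : φ '' s = Icc 0 1)
    (hF : ∀ x ∈ s, F x = φ x • p + (1 - φ x) • q) :
    F '' s = segment ℝ p q := by
  calc F '' s = (fun θ : ℝ => (1 - θ) • q + θ • p) '' (φ '' s) := by
        rw [image_image]
        exact image_congr fun x hx => (hF x hx).trans (add_comm _ _)
    _ = segment ℝ p q := by rw [hφ, segment_symm, segment_eq_image]

/-- If `P = {f_1,…,f_n}` is a pseudo-triangular basis with nodes
`0 = t_1 < ⋯ < t_n = 1`, then the range of `T_P`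
equals the Hamiltonian path `⋃_{i=1}^{n−1} conv{e_i, e_{i+1}}`. -/
theorem stmt4 (n : ℕ) (hn : 2 ≤ n) (f : Fin n → ℝ → ℝ) (t : Fin n → ℝ)
    (hmono : StrictMono t)
    (ht0 : t ⟨0, by omega⟩ = 0)
    (ht1 : t ⟨n - 1, by omega⟩ = 1)
    (hb : ∀ i : Fin n, ∀ hi : (i : ℕ) + 1 < n, ∀ j : Fin n,
        j ≠ i → j ≠ ⟨(i : ℕ) + 1, hi⟩ →
        ∀ x ∈ Set.Icc (t i) (t ⟨(i : ℕ) + 1, hi⟩), f j x = 0)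
    (hc : ∀ i : Fin n, ∀ hi : (i : ℕ) + 1 < n,
        ∀ x ∈ Set.Icc (t i) (t ⟨(i : ℕ) + 1, hi⟩),
        f ⟨(i : ℕ) + 1, hi⟩ x = 1 - f i x)
    (hd : ∀ i : Fin n, ∀ hi : (i : ℕ) + 1 < n,
        Set.BijOn (f i) (Set.Icc (t i) (t ⟨(i : ℕ) + 1, hi⟩)) (Set.Icc 0 1) ∧
        Set.BijOn (f ⟨(i : ℕ) + 1, hi⟩)
          (Set.Icc (t i) (t ⟨(i : ℕ) + 1, hi⟩)) (Set.Icc 0 1)) :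
    ∀ i : Fin n, ∀ hi : (i : ℕ) + 1 < n,
    (fun x => (WithLp.toLp 2 (fun j => f j x) : EuclideanSpace ℝ (Fin n))) '' (Set.Icc 0 1) =
      ⋃ i : Fin n, ⋃ hi : (i : ℕ) + 1 < n,
        segment ℝ (EuclideanSpace.single i 1)
          (EuclideanSpace.single (⟨(i : ℕ) + 1, hi⟩ : Fin n) 1) := by
  intro _ _
  have hcover := hmono.monotone.iUnion_Icc_consecutive hn
  rw [ht0, ht1] at hcover
  rw [← hcover, image_iUnion₂]
  refine iUnion₂_congr fun i hi => image_eq_segment_of_image_eq_Icc (hd i hi).1.image_eq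
    fun x hx => ?_
  rw [← hc i hi x hx]
  exact EuclideanSpace.toLp_eq_smul_single_add_smul_single (by simp [Fin.ext_iff])
    fun j hji hji' => hb i hi j hji hji' x hx
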